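/- arXiv:2302.10814 — 3 statements merged into one kernel-verified Lean document; each statement's English description precedes it below -/
import Mathlib

section
/- For every noncrossing partition λ of size n, T_λ ∈ C_λ, and T_λ is the Bruhat-minimum element of C_λ: T_λ ≤ w in the Bruhat order for every w ∈ C_λ. -/
open scoped Classical

noncomputable section

/-- `IsNCP n A` : `A` is the arc set of a noncrossing partition of size `n`
(arcs `(i,j)` with `i < j`; no two distinct arcs `(i,k)`, `(j,l)` with `i ≤ j < k ≤ l`,
i.e. no crossings and no shared endpoints). -/
def IsNCP (n : ℕ) (A : Finset (Fin n × Fin n)) : Prop :=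
  (∀ p ∈ A, p.1 < p.2) ∧
    ∀ p ∈ A, ∀ q ∈ A, p ≠ q → ¬(p.1 ≤ q.1 ∧ q.1 < p.2 ∧ p.2 ≤ q.2)

/-- Noncrossing partitions of size `n` (labelled `1, …, n`, realized as `Fin n`). -/
def NCP (n : ℕ) : Type := {A : Finset (Fin n × Fin n) // IsNCP n A}

noncomputable instance (n : ℕ) : Fintype (NCP n) := by
  unfold NCP; infer_instance

namespace NCP

variable {n : ℕ}

/-- The set `λ⁺` of left endpoints of arcs. -/
def lpos (lam : NCP n) : Finset (Fin n) := lam.1.image Prod.fst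

/-- The set `λ⁻` of right endpoints of arcs. -/
def rpos (lam : NCP n) : Finset (Fin n) := lam.1.image Prod.snd

/-- `a` and `b` lie in the same connected component of `λ` viewed as a graph. -/
def Connected (lam : NCP n) (a b : Fin n) : Prop :=
  Relation.ReflTransGen (fun x y => (x, y) ∈ lam.1 ∨ (y, x) ∈ lam.1) a b

/-- The connected component of `j` in `λ`. -/
def component (lam : NCP n) (j : Fin n) : Finset (Fin n) :=
  Finset.univ.filter fun i => Connected lam j i

theorem mem_component_self (lam : NCP n) (j : Fin n) : j ∈ component lam j :=
  Finset.mem_filter.mpr ⟨Finset.mem_univ j, Relation.ReflTransGen.refl⟩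

/-- The largest element of the connected component of `j` in `λ`. -/
def compMax (lam : NCP n) (j : Fin n) : Fin n :=
  (component lam j).max' ⟨j, mem_component_self lam j⟩

/-- The function underlying the permutation `Q_λ` : `j ↦ i` if `(i,j)` is an arc of `λ`,
and `j ↦` the largest element of the connected component of `j` otherwise. -/
def Qfun (lam : NCP n) (j : Fin n) : Fin n :=
  if h : ∃ i, (i, j) ∈ lam.1 then h.choose else compMax lam j

/-- `Q` is the permutation `Q_λ`. -/
def IsQ (lam : NCP n) (Q : Equiv.Perm (Fin n)) : Prop :=
  ∀ j, Q j = Qfun lam j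

/-- `T` is the permutation `T_λ` : the bijection mapping `λ⁻` onto `λ⁺` in an
order-preserving way and the complement of `λ⁻` onto the complement of `λ⁺` in an
order-preserving way. -/
def IsT (lam : NCP n) (T : Equiv.Perm (Fin n)) : Prop :=
  (∀ j, j ∈ rpos lam ↔ T j ∈ lpos lam) ∧
  (∀ j j', j ∈ rpos lam → j' ∈ rpos lam → j < j' → T j < T j') ∧
  (∀ j j', j ∉ rpos lam → j' ∉ rpos lam → j < j' → T j < T j')

end NCP

/-- Weak excedance positions `E_pos(w) = {i : i ≤ w(i)}`. -/
def ExcPos {n : ℕ} (w : Equiv.Perm (Fin n)) : Finset (Fin n) :=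
  Finset.univ.filter fun i => i ≤ w i

/-- Weak excedance values `E_val(w) = {w(i) : i ≤ w(i)}`. -/
def ExcVal {n : ℕ} (w : Equiv.Perm (Fin n)) : Finset (Fin n) :=
  (ExcPos w).image w

/-- The excedance relation `∼`. -/
def ExcEq {n : ℕ} (v w : Equiv.Perm (Fin n)) : Prop :=
  ExcVal v = ExcVal w ∧ ExcPos v = ExcPos w

/-- The excedance relation as a setoid on `S_n`. -/
def excSetoid (n : ℕ) : Setoid (Equiv.Perm (Fin n)) where
  r := ExcEq
  iseqv := ⟨fun _ => ⟨rfl, rfl⟩, fun h => ⟨h.1.symm, h.2.symm⟩,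
    fun h h' => ⟨h.1.trans h'.1, h.2.trans h'.2⟩⟩

namespace NCP

/-- The excedance class `C_λ`. -/
def Cset {n : ℕ} (lam : NCP n) : Set (Equiv.Perm (Fin n)) :=
  {w | ExcVal w = Finset.univ \ lpos lam ∧ ExcPos w = Finset.univ \ rpos lam}

end NCP

/-- Number of inversions of a permutation. -/
def bruhatLen {n : ℕ} (w : Equiv.Perm (Fin n)) : ℕ :=
  (Finset.univ.filter fun p : Fin n × Fin n => p.1 < p.2 ∧ w p.2 < w p.1).card

/-- The Bruhat order on `S_n` : generated by `v < w` whenever `w v⁻¹` is a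
transposition and `ℓ(v) < ℓ(w)`. -/
def BruhatLE {n : ℕ} (v w : Equiv.Perm (Fin n)) : Prop :=
  Relation.ReflTransGen (fun a b => (b * a⁻¹).IsSwap ∧ bruhatLen a < bruhatLen b) v w

/-- Strict Bruhat order. -/
def BruhatLT {n : ℕ} (v w : Equiv.Perm (Fin n)) : Prop :=
  BruhatLE v w ∧ v ≠ w

/-- `λ` is covered by `μ` : `λ` is obtained from `μ` by removing an arc `(i, i+1)`,
or by replacing an arc `(i,k)` by two arcs `(i,j)`, `(j,k)` with `i < j < k`
(validity of the result is enforced by `λ` being a noncrossing partition). -/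
def NCPCovBy {n : ℕ} (lam mu : NCP n) : Prop :=
  (∃ i j : Fin n, (j : ℕ) = (i : ℕ) + 1 ∧ (i, j) ∈ mu.1 ∧ lam.1 = mu.1.erase (i, j)) ∨
  (∃ i j k : Fin n, i < j ∧ j < k ∧ (i, k) ∈ mu.1 ∧
      lam.1 = insert (i, j) (insert (j, k) (mu.1.erase (i, k))))

/-- The partial order `⪯` on noncrossing partitions generated by the covering relation. -/
def NCPle {n : ℕ} (lam mu : NCP n) : Prop :=
  Relation.ReflTransGen (fun a b => NCPCovBy a b) lam mu

/-- The defining relations of the Temperley–Lieb algebra `TL_n(2)`. -/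
inductive TLRel (n : ℕ) : FreeAlgebra ℂ (Fin (n - 1)) → FreeAlgebra ℂ (Fin (n - 1)) → Prop
  | sq (i : Fin (n - 1)) :
      TLRel n (FreeAlgebra.ι ℂ i * FreeAlgebra.ι ℂ i) (2 * FreeAlgebra.ι ℂ i)
  | far (i j : Fin (n - 1)) (h : (i : ℕ) + 1 < (j : ℕ) ∨ (j : ℕ) + 1 < (i : ℕ)) :
      TLRel n (FreeAlgebra.ι ℂ i * FreeAlgebra.ι ℂ j) (FreeAlgebra.ι ℂ j * FreeAlgebra.ι ℂ i)
  | near (i j : Fin (n - 1)) (h : (i : ℕ) + 1 = (j : ℕ) ∨ (j : ℕ) + 1 = (i : ℕ)) :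
      TLRel n (FreeAlgebra.ι ℂ i * FreeAlgebra.ι ℂ j * FreeAlgebra.ι ℂ i) (FreeAlgebra.ι ℂ i)

/-- The Temperley–Lieb algebra `TL_n(2)`. -/
abbrev TL (n : ℕ) := RingQuot (TLRel n)

/-- The generator `e_i` of `TL_n(2)`. -/
def TLgen (n : ℕ) (i : Fin (n - 1)) : TL n :=
  RingQuot.mkAlgHom ℂ (TLRel n) (FreeAlgebra.ι ℂ i)

/-- The simple transposition `s_i = (i, i+1)` in `S_n`. -/
def simpleTransposition (n : ℕ) (i : Fin (n - 1)) : Equiv.Perm (Fin n) :=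
  Equiv.swap ⟨i.val, lt_of_lt_of_le i.isLt (Nat.sub_le n 1)⟩
    ⟨i.val + 1, by have h := i.isLt; omega⟩

open MvPolynomial

/-- The monomial quasisymmetric polynomial `M_α` in `n` variables,
for a composition `α = (α 0, …, α (k-1))`. -/
noncomputable def Mpoly (n k : ℕ) (α : Fin k → ℕ) : MvPolynomial (Fin n) ℚ :=
  ∑ c ∈ Finset.univ.filter (fun c : Fin k → Fin n => StrictMono c),
    ∏ s : Fin k, X (c s) ^ α s

/-- The vanishing polynomial `P_α`.  The sum over pairs (a coarsening `β ⪰ α` with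
blocks witnessed by `1 = f_1 < ⋯ < f_{ℓ+1} = k+1`, and indices `i_1 < ⋯ < i_ℓ`)
is re-indexed by monotone maps `c : Fin k → Fin n`: the fibers of `c` are the blocks of
the coarsening, and `c` sends the `j`-th block to `i_j`.  The variable with 1-based label
`i` is `x_i`, so the rational constant attached to `c s : Fin n` is `(c s : ℕ) + 1`. -/
noncomputable def Ppoly (n k : ℕ) (α : Fin k → ℕ) : MvPolynomial (Fin n) ℚ :=
  ∑ c ∈ Finset.univ.filter (fun c : Fin k → Fin n => Monotone c),
    ∏ s : Fin k,
      if ∀ t, t < s → c t < c s then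
        X (c s) ^ α s - C ((((c s : ℕ) : ℚ) + 1) ^ α s)
      else C ((-(((c s : ℕ) : ℚ) + 1)) ^ α s)

/-- The top-degree homogeneous component `h(f)`. -/
noncomputable def topHom {n : ℕ} (f : MvPolynomial (Fin n) ℚ) : MvPolynomial (Fin n) ℚ :=
  MvPolynomial.homogeneousComponent f.totalDegree f

/-- The set `QSV_n ⊆ S_n`. -/
def QSVset (n : ℕ) : Set (Equiv.Perm (Fin n)) := {σ | ∃ lam : NCP n, NCP.IsQ lam σ}

/-- The point `(σ(1), …, σ(n)) ∈ ℚⁿ` associated to a permutation (1-based labels). -/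
def permPoint {n : ℕ} (σ : Equiv.Perm (Fin n)) : Fin n → ℚ := fun i => ((σ i : ℕ) : ℚ) + 1

/-- `QSV_n` as a set of points in `ℚⁿ`. -/
def QSVpoints (n : ℕ) : Set (Fin n → ℚ) := {p | ∃ σ ∈ QSVset n, p = permPoint σ}

/-- The vanishing ideal of a set of points in `ℚⁿ`. -/
noncomputable def vanishingIdeal (n : ℕ) (S : Set (Fin n → ℚ)) :
    Ideal (MvPolynomial (Fin n) ℚ) where
  carrier := {f | ∀ p ∈ S, MvPolynomial.eval p f = 0}
  add_mem' := by
    intro a b ha hb p hp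
    simp [map_add, ha p hp, hb p hp]
  zero_mem' := by
    intro p hp
    simp
  smul_mem' := by
    intro c f hf p hp
    simp [smul_eq_mul, map_mul, hf p hp]

/-- The monomial quasisymmetric polynomials `M_α` for nonempty compositions `α`
with `ℓ(α) ≤ n`. -/
def MpolySet (n : ℕ) : Set (MvPolynomial (Fin n) ℚ) :=
  {f | ∃ k, ∃ α : Fin k → ℕ, 0 < k ∧ k ≤ n ∧ (∀ s, 0 < α s) ∧ f = Mpoly n k α}

/-- The vanishing polynomials `P_α` for nonempty compositions `α` with `ℓ(α) ≤ n`. -/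
def PpolySet (n : ℕ) : Set (MvPolynomial (Fin n) ℚ) :=
  {f | ∃ k, ∃ α : Fin k → ℕ, 0 < k ∧ k ≤ n ∧ (∀ s, 0 < α s) ∧ f = Ppoly n k α}

/-- The space `QSym_n` of quasisymmetric polynomials : the span of `1` and the `M_α`. -/
def QSym (n : ℕ) : Submodule ℚ (MvPolynomial (Fin n) ℚ) :=
  Submodule.span ℚ (insert 1 (MpolySet n))

/-- `QSym_n⁺` : quasisymmetric polynomials with zero constant term. -/
def QSymPlus (n : ℕ) : Set (MvPolynomial (Fin n) ℚ) :=
  {f | f ∈ QSym n ∧ MvPolynomial.constantCoeff f = 0}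

/-- `gr(I) = ⟨h(f) : f ∈ I⟩`. -/
noncomputable def grIdeal (n : ℕ) (I : Ideal (MvPolynomial (Fin n) ℚ)) :
    Ideal (MvPolynomial (Fin n) ℚ) :=
  Ideal.span (topHom '' (I : Set (MvPolynomial (Fin n) ℚ)))

/-!
Every right endpoint `≤ x` closes an arc opened strictly before `x`, so among the points `≤ x`
there are at most as many right endpoints as left endpoints `< x`. Hence the order-preserving
matching of `λ⁻` onto `λ⁺` moves every point strictly to the left, and the one of the
complements moves every point weakly to the right: `T_λ ∈ C_λ`.

An element `w ≠ T_λ` of `C_λ` is not order-preserving on both `λ⁻` and its complement, so it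
has an inversion `j < j'` inside one of them; `w * (j j')` is again in `C_λ` and has fewer
inversions. Descending this way from any `w ∈ C_λ` ends at `T_λ`.
-/

open Finset Equiv

section Counting

variable {α β : Type*} [LinearOrder α] [LinearOrder β] {s t : Finset α} {f g : α → β} {a b j : α}

theorem card_filter_le_lt_of_lt (hb : b ∈ s) (hab : a < b) :
    #{y ∈ s | y ≤ a} < #{y ∈ s | y ≤ b} :=
  card_lt_card <| (ssubset_iff_of_subset fun y hy => by
    simp only [mem_filter] at hy ⊢; exact ⟨hy.1, hy.2.trans hab.le⟩).2
    ⟨b, by simp [hb], by simp [hab]⟩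

theorem card_filter_lt_le (s : Finset α) (a : α) : #{y ∈ s | y < a} ≤ #{y ∈ s | y ≤ a} :=
  card_le_card fun y hy => by
    simp only [mem_filter] at hy ⊢; exact ⟨hy.1, hy.2.le⟩

theorem card_filter_lt_lt_of_mem (ha : a ∈ s) : #{y ∈ s | y < a} < #{y ∈ s | y ≤ a} :=
  card_lt_card <| (ssubset_iff_of_subset fun y hy => by
    simp only [mem_filter] at hy ⊢; exact ⟨hy.1, hy.2.le⟩).2 ⟨a, by simp [ha], by simp⟩

theorem card_filter_le_mono (s : Finset α) (hab : a ≤ b) :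
    #{y ∈ s | y ≤ a} ≤ #{y ∈ s | y ≤ b} :=
  card_le_card fun y hy => by
    simp only [mem_filter] at hy ⊢; exact ⟨hy.1, hy.2.trans hab⟩

theorem StrictMonoOn.card_filter_le_image_apply (hf : StrictMonoOn f s) (hj : j ∈ s) :
    #{y ∈ s.image f | y ≤ f j} = #{x ∈ s | x ≤ j} := by
  rw [filter_image, card_image_of_injOn (hf.injOn.mono (coe_subset.2 (filter_subset _ _)))]
  congr 1
  exact filter_congr fun x hx => hf.le_iff_le hx hj

theorem StrictMonoOn.apply_eq_of_image_eq (hf : StrictMonoOn f s) (hg : StrictMonoOn g s)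
    (himage : s.image f = s.image g) (hj : j ∈ s) : f j = g j := by
  have hcard : #{y ∈ s.image f | y ≤ f j} = #{y ∈ s.image f | y ≤ g j} := by
    rw [hf.card_filter_le_image_apply hj, himage, hg.card_filter_le_image_apply hj]
  have hfj : f j ∈ s.image f := mem_image_of_mem f hj
  have hgj : g j ∈ s.image f := himage ▸ mem_image_of_mem g hj
  rcases lt_trichotomy (f j) (g j) with h | h | h
  · exact absurd hcard (card_filter_le_lt_of_lt hgj h).ne
  · exact h
  · exact absurd hcard (card_filter_le_lt_of_lt hfj h).ne'

theorem StrictMonoOn.apply_lt_of_card_filter_le {f : α → α} (hf : StrictMonoOn f s)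
    (hdom : ∀ x, #{y ∈ s | y ≤ x} ≤ #{y ∈ s.image f | y < x}) (hj : j ∈ s) : f j < j := by
  by_contra! hle
  have := calc #{x ∈ s | x ≤ j} ≤ #{x ∈ s | x ≤ f j} := card_filter_le_mono s hle
    _ ≤ #{y ∈ s.image f | y < f j} := hdom (f j)
    _ < #{y ∈ s.image f | y ≤ f j} := card_filter_lt_lt_of_mem (mem_image_of_mem f hj)
    _ = #{x ∈ s | x ≤ j} := hf.card_filter_le_image_apply hj
  exact this.false

theorem StrictMonoOn.le_apply_of_card_filter_le {f : α → α} (hf : StrictMonoOn f s)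
    (hdom : ∀ x, #{y ∈ s.image f | y ≤ x} ≤ #{y ∈ s | y ≤ x}) (hj : j ∈ s) : j ≤ f j := by
  by_contra! hlt
  have := calc #{x ∈ s | x ≤ j} = #{y ∈ s.image f | y ≤ f j} :=
        (hf.card_filter_le_image_apply hj).symm
    _ ≤ #{x ∈ s | x ≤ f j} := hdom (f j)
    _ < #{x ∈ s | x ≤ j} := card_filter_le_lt_of_lt hj hlt
  exact this.false

theorem card_filter_compl_le_of_card_filter_le [Fintype α]
    (h : #{y ∈ s | y ≤ a} ≤ #{y ∈ t | y ≤ a}) : #{y ∈ tᶜ | y ≤ a} ≤ #{y ∈ sᶜ | y ≤ a} := by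
  have hsplit (u : Finset α) : #{y ∈ u | y ≤ a} + #{y ∈ uᶜ | y ≤ a} = #{y | y ≤ a} := by
    rw [← card_union_of_disjoint (disjoint_filter_filter disjoint_compl_right), ← filter_union,
      union_compl]
  have := hsplit s; have := hsplit t
  omega

end Counting

theorem apply_lt_apply_of_swap_inversion {α β : Type*} [LinearOrder α] [LinearOrder β]
    {w : α → β} {j j' p q : α} (hjj' : j < j') (hw : w j' < w j) (hpq : p < q)
    (hswap : swap j j' q < swap j j' p)
    (hinv : w (swap j j' q) < w (swap j j' p)) : w q < w p := by
  simp only [swap_apply_def] at hswap hinv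
  split_ifs at hswap hinv <;> subst_vars <;> order

def inversions {n : ℕ} (w : Perm (Fin n)) : Finset (Fin n × Fin n) :=
  {p | p.1 < p.2 ∧ w p.2 < w p.1}

@[simp]
theorem mem_inversions {n : ℕ} {w : Perm (Fin n)} {p : Fin n × Fin n} :
    p ∈ inversions w ↔ p.1 < p.2 ∧ w p.2 < w p.1 := by
  simp [inversions]

/-- Relabelling an inversion of `w * swap j j'` by `swap j j'` when that keeps it increasing
injects the inversions of `w * swap j j'` into those of `w` other than `(j, j')`. -/
theorem bruhatLen_mul_swap_lt {n : ℕ} {w : Perm (Fin n)} {j j' : Fin n} (hjj' : j < j')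
    (hw : w j' < w j) : bruhatLen (w * swap j j') < bruhatLen w := by
  let σ := swap j j'
  let φ : Fin n × Fin n → Fin n × Fin n := fun x => if σ x.1 < σ x.2 then (σ x.1, σ x.2) else x
  have hmaps : ∀ x ∈ inversions (w * σ), φ x ∈ (inversions w).erase (j, j') := by
    rintro ⟨p, q⟩ hx
    simp only [mem_inversions, Perm.mul_apply] at hx
    obtain ⟨hpq, hinv⟩ := hx
    simp only [φ, mem_erase, mem_inversions]
    split_ifs with hσ
    · refine ⟨fun h => ?_, hσ, hinv⟩
      simp only [Prod.mk.injEq, σ, swap_apply_eq_iff, swap_apply_left, swap_apply_right] at h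
      obtain ⟨rfl, rfl⟩ := h
      exact hjj'.not_gt hpq
    · have hσ' : σ q < σ p := lt_of_le_of_ne (not_lt.1 hσ) (σ.injective.ne hpq.ne')
      refine ⟨fun h => ?_, hpq, apply_lt_apply_of_swap_inversion hjj' hw hpq hσ' hinv⟩
      simp only [Prod.mk.injEq] at h
      obtain ⟨rfl, rfl⟩ := h
      simp only [σ, swap_apply_left, swap_apply_right] at hinv
      exact hinv.not_gt hw
  have hinj : Set.InjOn φ (inversions (w * σ)) := by
    rintro ⟨p, q⟩ hx ⟨p', q'⟩ hy h
    simp only [mem_coe, mem_inversions] at hx hy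
    simp only [φ] at h
    split_ifs at h with h1 h2 h2 <;> simp only [Prod.mk.injEq, σ.injective.eq_iff] at h
    · rw [h.1, h.2]
    · obtain ⟨rfl, rfl⟩ := h; simp only [σ, swap_apply_self] at h2; order
    · obtain ⟨rfl, rfl⟩ := h; simp only [σ, swap_apply_self] at h1; order
    · rw [h.1, h.2]
  have hjj'_mem : (j, j') ∈ inversions w := by simp [hjj', hw]
  calc bruhatLen (w * σ) ≤ #((inversions w).erase (j, j')) := card_le_card_of_injOn φ hmaps hinj
    _ < bruhatLen w := card_erase_lt_of_mem hjj'_mem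

theorem bruhatLE_of_forall_exists_mul_swap {n : ℕ} {S : Set (Perm (Fin n))} {v : Perm (Fin n)}
    (hdesc : ∀ w ∈ S, w ≠ v → ∃ j j', j < j' ∧ w j' < w j ∧ w * swap j j' ∈ S) :
    ∀ w ∈ S, BruhatLE v w := by
  intro w hw
  induction hlen : bruhatLen w using Nat.strong_induction_on generalizing w with
  | _ N ih =>
    obtain rfl | hne := eq_or_ne w v
    · exact Relation.ReflTransGen.refl
    obtain ⟨j, j', hjj', hw', hmem⟩ := hdesc w hw hne
    have hlt := bruhatLen_mul_swap_lt hjj' hw'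
    have hswap : (w * (w * swap j j')⁻¹).IsSwap := by
      refine ⟨w j, w j', w.injective.ne hjj'.ne, ?_⟩
      rw [mul_inv_rev, swap_inv, ← mul_assoc, swap_apply_apply]
    exact (ih _ (hlen ▸ hlt) _ hmem rfl).tail ⟨hswap, hlt⟩

theorem Equiv.Perm.image_eq_iff {α : Type*} [DecidableEq α] {w : Perm α} {s t : Finset α} :
    s.image w = t ↔ ∀ i, w i ∈ t ↔ i ∈ s := by
  constructor
  · rintro rfl i
    exact w.injective.mem_finset_image
  · intro h
    ext y
    rw [← w.apply_symm_apply y, w.injective.mem_finset_image, h]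

theorem Equiv.Perm.image_compl_eq {α : Type*} [DecidableEq α] [Fintype α] {w : Perm α}
    {s t : Finset α} (h : ∀ i, w i ∈ t ↔ i ∈ s) : sᶜ.image w = tᶜ :=
  image_eq_iff.2 fun i => by simp [h i]

theorem Equiv.Perm.forall_mul_swap_apply {α : Type*} [DecidableEq α] {P : α → α → Prop}
    {w : Perm α} {j j' : α} (h : ∀ i, P i (w i)) (hj : P j (w j')) (hj' : P j' (w j)) :
    ∀ i, P i ((w * swap j j') i) := by
  intro i
  rw [Perm.mul_apply, swap_apply_def]
  split_ifs with h₁ h₂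
  exacts [h₁ ▸ hj, h₂ ▸ hj', h i]

namespace NCP

variable {n : ℕ} {lam : NCP n}

theorem fst_injOn (lam : NCP n) : Set.InjOn Prod.fst (lam.1 : Set (Fin n × Fin n)) := by
  suffices ∀ p ∈ lam.1, ∀ q ∈ lam.1, p.1 = q.1 → p.2 ≤ q.2 → p = q by
    intro p hp q hq h
    rcases le_total p.2 q.2 with hle | hle
    exacts [this p hp q hq h hle, (this q hq p hp h.symm hle).symm]
  intro p hp q hq h hle
  by_contra hne
  exact lam.2.2 p hp q hq hne ⟨h.le, h ▸ lam.2.1 p hp, hle⟩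

theorem card_filter_rpos_le_lt (lam : NCP n) (x : Fin n) :
    #{y ∈ lam.rpos | y ≤ x} ≤ #{y ∈ lam.lpos | y < x} := by
  let arcs := lam.1.filter (·.2 ≤ x)
  have hr : {y ∈ lam.rpos | y ≤ x} = arcs.image Prod.snd := by
    simp only [rpos, filter_image, arcs]
  have hl : arcs.image Prod.fst ⊆ {y ∈ lam.lpos | y < x} := by
    intro y hy
    obtain ⟨p, hp, rfl⟩ := mem_image.1 hy
    obtain ⟨hp, hpx⟩ := mem_filter.1 hp
    exact mem_filter.2 ⟨mem_image_of_mem _ hp, (lam.2.1 p hp).trans_le hpx⟩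
  calc #{y ∈ lam.rpos | y ≤ x} ≤ #arcs := hr ▸ card_image_le
    _ = #(arcs.image Prod.fst) :=
      (card_image_of_injOn ((fst_injOn lam).mono (coe_subset.2 (filter_subset _ _)))).symm
    _ ≤ #{y ∈ lam.lpos | y < x} := card_le_card hl

theorem mem_Cset_iff {w : Perm (Fin n)} :
    w ∈ lam.Cset ↔ (∀ i, i ≤ w i ↔ i ∉ lam.rpos) ∧ ∀ i, w i ∈ lam.lpos ↔ i ∈ lam.rpos := by
  have hpos : ExcPos w = univ \ lam.rpos ↔ ∀ i, i ≤ w i ↔ i ∉ lam.rpos := by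
    simp [Finset.ext_iff, ExcPos]
  rw [Cset, Set.mem_ofPred_eq, ExcVal, and_comm, hpos]
  refine and_congr_right fun h => ?_
  rw [hpos.2 h, Perm.image_eq_iff]
  simp only [mem_sdiff, mem_univ, true_and, not_iff_not]

theorem mul_swap_mem_Cset {w : Perm (Fin n)} (hw : w ∈ lam.Cset) {j j' : Fin n} (hjj' : j < j')
    (hw' : w j' < w j) (hclass : j ∈ lam.rpos ↔ j' ∈ lam.rpos) : w * swap j j' ∈ lam.Cset := by
  obtain ⟨hpos, hval⟩ := mem_Cset_iff.1 hw
  have hexc : (j ≤ w j' ↔ j ∉ lam.rpos) ∧ (j' ≤ w j ↔ j' ∉ lam.rpos) := by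
    have hj := hpos j
    have hj' := hpos j'
    by_cases hr : j ∈ lam.rpos
    · simp only [hr, hclass.1 hr, not_true_eq_false, iff_false, not_le] at hj hj' ⊢
      exact ⟨hw'.trans hj, hj.trans hjj'⟩
    · simp only [hr, hclass.not.1 hr, not_false_eq_true, iff_true] at hj hj' ⊢
      exact ⟨hjj'.le.trans hj', hj'.trans hw'.le⟩
  exact mem_Cset_iff.2
    ⟨Perm.forall_mul_swap_apply (P := fun i v => i ≤ v ↔ i ∉ lam.rpos) hpos hexc.1 hexc.2,
      Perm.forall_mul_swap_apply (P := fun i v => v ∈ lam.lpos ↔ i ∈ lam.rpos) hval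
        ((hval j').trans hclass.symm) ((hval j).trans hclass)⟩

theorem IsT.strictMonoOn_rpos {T : Perm (Fin n)} (hT : lam.IsT T) : StrictMonoOn T lam.rpos :=
  fun a ha b hb hab => hT.2.1 a b ha hb hab

theorem IsT.strictMonoOn_rpos_compl {T : Perm (Fin n)} (hT : lam.IsT T) :
    StrictMonoOn T ↑lam.rposᶜ := fun a ha b hb hab =>
  hT.2.2 a b (by simpa using ha) (by simpa using hb) hab

theorem IsT.apply_mem_lpos_iff {T : Perm (Fin n)} (hT : lam.IsT T) (i : Fin n) :
    T i ∈ lam.lpos ↔ i ∈ lam.rpos :=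
  (hT.1 i).symm

theorem IsT.mem_Cset {T : Perm (Fin n)} (hT : lam.IsT T) : T ∈ lam.Cset := by
  have himage : lam.rpos.image T = lam.lpos := Perm.image_eq_iff.2 hT.apply_mem_lpos_iff
  have himage' : lam.rposᶜ.image T = lam.lposᶜ := Perm.image_compl_eq hT.apply_mem_lpos_iff
  refine mem_Cset_iff.2 ⟨fun i => ⟨fun hi hr => ?_, fun hi => ?_⟩, hT.apply_mem_lpos_iff⟩
  · exact (hT.strictMonoOn_rpos.apply_lt_of_card_filter_le
      (himage ▸ lam.card_filter_rpos_le_lt) hr).not_ge hi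
  · refine hT.strictMonoOn_rpos_compl.le_apply_of_card_filter_le (fun x => himage' ▸ ?_)
      (mem_compl.2 hi)
    exact card_filter_compl_le_of_card_filter_le
      ((lam.card_filter_rpos_le_lt x).trans (card_filter_lt_le _ x))

theorem IsT.eq_of_strictMonoOn {T w : Perm (Fin n)} (hT : lam.IsT T) (hw : w ∈ lam.Cset)
    (hR : StrictMonoOn w lam.rpos) (hRc : StrictMonoOn w ↑lam.rposᶜ) : w = T := by
  have hval := (mem_Cset_iff.1 hw).2
  ext i
  by_cases hi : i ∈ lam.rpos
  · refine congrArg Fin.val (hR.apply_eq_of_image_eq hT.strictMonoOn_rpos ?_ hi)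
    rw [Perm.image_eq_iff.2 hval, Perm.image_eq_iff.2 hT.apply_mem_lpos_iff]
  · refine congrArg Fin.val
      (hRc.apply_eq_of_image_eq hT.strictMonoOn_rpos_compl ?_ (mem_compl.2 hi))
    rw [Perm.image_compl_eq hval, Perm.image_compl_eq hT.apply_mem_lpos_iff]

theorem IsT.exists_mul_swap_mem_Cset {T w : Perm (Fin n)} (hT : lam.IsT T) (hw : w ∈ lam.Cset)
    (hne : w ≠ T) : ∃ j j', j < j' ∧ w j' < w j ∧ w * swap j j' ∈ lam.Cset := by
  suffices ∃ j j', j < j' ∧ w j' < w j ∧ (j ∈ lam.rpos ↔ j' ∈ lam.rpos) by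
    obtain ⟨j, j', hjj', hw', hclass⟩ := this
    exact ⟨j, j', hjj', hw', mul_swap_mem_Cset hw hjj' hw' hclass⟩
  by_contra h
  have hmono (s : Finset (Fin n)) (hs : ∀ a ∈ s, ∀ b ∈ s, (a ∈ lam.rpos ↔ b ∈ lam.rpos)) :
      StrictMonoOn w s := fun a ha b hb hab => lt_of_not_ge fun hba =>
    h ⟨a, b, hab, lt_of_le_of_ne hba (w.injective.ne hab.ne'), hs a ha b hb⟩
  exact hne (hT.eq_of_strictMonoOn hw (hmono _ fun a ha b hb => iff_of_true ha hb)
    (hmono _ fun a ha b hb => iff_of_false (by simpa using ha) (by simpa using hb)))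

end NCP

/-- `T_λ ∈ C_λ` and `T_λ` is the Bruhat-minimum element of `C_λ`. -/
theorem stmt7 (n : ℕ) (lam : NCP n) (T : Equiv.Perm (Fin n)) (hT : NCP.IsT lam T) :
    T ∈ NCP.Cset lam ∧ ∀ w ∈ NCP.Cset lam, BruhatLE T w :=
  ⟨hT.mem_Cset, bruhatLE_of_forall_exists_mul_swap fun _ hw hne =>
    hT.exists_mul_swap_mem_Cset hw hne⟩
end
end

section
/- For every noncrossing partition λ of size n, the permutation T_λ is 321-avoiding: there are no indices i < j < k with T_λ(i) > T_λ(j) > T_λ(k). -/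
open scoped Classical

noncomputable section

open MvPolynomial

section ThreeTwoOne

variable {α β : Type*} [LinearOrder α] [Preorder β] {f : α → β} {s : Set α}

theorem lt_of_strictMonoOn_of_strictMonoOn_compl (hs : StrictMonoOn f s)
    (hsc : StrictMonoOn f sᶜ) {a b : α} (hab : a < b) (hmem : a ∈ s ↔ b ∈ s) : f a < f b := by
  by_cases ha : a ∈ s
  · exact hs ha (hmem.mp ha) hab
  · exact hsc ha (mt hmem.mpr ha) hab

/-- Of three positions two lie on the same side of `s`, and `f` cannot invert that pair. -/
theorem not_pattern321_of_strictMonoOn_of_strictMonoOn_compl (hs : StrictMonoOn f s)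
    (hsc : StrictMonoOn f sᶜ) {i j k : α} (hij : i < j) (hjk : j < k) :
    ¬(f k < f j ∧ f j < f i) := by
  rintro ⟨hkj, hji⟩
  by_cases hmij : i ∈ s ↔ j ∈ s
  · exact lt_asymm hji (lt_of_strictMonoOn_of_strictMonoOn_compl hs hsc hij hmij)
  by_cases hmjk : j ∈ s ↔ k ∈ s
  · exact lt_asymm hkj (lt_of_strictMonoOn_of_strictMonoOn_compl hs hsc hjk hmjk)
  have hmik : i ∈ s ↔ k ∈ s := by tauto
  exact lt_asymm (hkj.trans hji)
    (lt_of_strictMonoOn_of_strictMonoOn_compl hs hsc (hij.trans hjk) hmik)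

end ThreeTwoOne

namespace NCP.IsT

variable {n : ℕ} {lam : NCP n} {T : Equiv.Perm (Fin n)}

theorem strictMonoOn_rpos_s8 (hT : IsT lam T) : StrictMonoOn T (rpos lam : Set (Fin n)) :=
  fun _ hj _ hj' hjj' => hT.2.1 _ _ hj hj' hjj'

theorem strictMonoOn_compl_rpos (hT : IsT lam T) :
    StrictMonoOn T (rpos lam : Set (Fin n))ᶜ :=
  fun _ hj _ hj' hjj' => hT.2.2 _ _ hj hj' hjj'

end NCP.IsT

/-- the permutation `T_λ` is `321`-avoiding. -/
theorem stmt8 (n : ℕ) (lam : NCP n) (T : Equiv.Perm (Fin n)) (hT : NCP.IsT lam T) :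
    ∀ i j k : Fin n, i < j → j < k → ¬(T k < T j ∧ T j < T i) :=
  fun _ _ _ hij hjk =>
    not_pattern321_of_strictMonoOn_of_strictMonoOn_compl hT.strictMonoOn_rpos_s8
      hT.strictMonoOn_compl_rpos hij hjk
end
end

section
/- For every noncrossing partition λ of size n, the excedance class C_λ is a Bruhat interval: C_λ = {w ∈ S_n : T_λ ≤ w ≤ Q_λ in the Bruhat order}, with Bruhat-minimum the 321-avoiding permutation T_λ and Bruhat-maximum Q_λ. -/
open scoped Classical

noncomputable section

open MvPolynomial

/-!
By the tableau criterion, `v ≤ w` in the Bruhat order iff the rank matrix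
`rankCount w m x = #{a < m | w a < x}` lies entrywise below that of `v`.

On the diagonal and just below it, the rank matrix determines and is determined by the weak
excedance positions and values. So a permutation whose rank matrix lies between those of `T_λ`
and `Q_λ`, which are both in `C_λ`, is itself in `C_λ`.

Conversely, `w ∈ C_λ` maps `λ⁻` onto `λ⁺` and the complement of `λ⁻` onto the complement of
`λ⁺`. Among such maps, the order-preserving `T_λ` has the largest rank matrix. At the other end,
`Q_λ` matches these points along the arcs of `λ` and the hulls of its blocks; both families are
noncrossing, and a noncrossing matching puts the largest possible number of pairs inside every
window, which gives `Q_λ` the smallest rank matrix.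

Finally, `T_λ` is increasing on `λ⁻` and on its complement, so it avoids `321`.
-/

open Finset

section RankCount

variable {n : ℕ}

def rankCount (u : Equiv.Perm (Fin n)) (m x : ℕ) : ℕ :=
  #{a : Fin n | (a : ℕ) < m ∧ (u a : ℕ) < x}

theorem rankCount_inv (u : Equiv.Perm (Fin n)) (m x : ℕ) :
    rankCount u⁻¹ x m = rankCount u m x :=
  (card_equiv u fun a => by simp [and_comm]).symm

theorem rankCount_succ_left (u : Equiv.Perm (Fin n)) (j : Fin n) (x : ℕ) :
    rankCount u (j + 1) x = rankCount u j x + if (u j : ℕ) < x then 1 else 0 := by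
  have hsplit : ∀ a : Fin n,
      (if (a : ℕ) < j + 1 ∧ (u a : ℕ) < x then 1 else 0) =
        (if (a : ℕ) < j ∧ (u a : ℕ) < x then 1 else 0) +
          if a = j then (if (u j : ℕ) < x then 1 else 0) else 0 := by
    intro a
    rcases eq_or_ne a j with rfl | h
    · simp
    · have : (a : ℕ) ≠ j := Fin.val_ne_of_ne h
      simp only [h, if_false]
      split_ifs <;> omega
  simp only [rankCount, card_filter, hsplit, sum_add_distrib, Fintype.sum_ite_eq']

theorem rankCount_succ_right (u : Equiv.Perm (Fin n)) (m : ℕ) (v : Fin n) :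
    rankCount u m (v + 1) = rankCount u m v + if ((u⁻¹ v : Fin n) : ℕ) < m then 1 else 0 := by
  rw [← rankCount_inv, rankCount_succ_left, rankCount_inv]

theorem rankCount_eq_add_window (u : Equiv.Perm (Fin n)) {l m : ℕ} (hlm : l ≤ m) (x : ℕ) :
    rankCount u m x =
      rankCount u l x + #{a : Fin n | l ≤ (a : ℕ) ∧ (a : ℕ) < m ∧ (u a : ℕ) < x} := by
  simp only [rankCount, card_filter, ← sum_add_distrib]
  exact sum_congr rfl fun a _ => by split_ifs <;> omega

theorem sum_eq_sum_sdiff_pair_add {α M : Type*} [Fintype α] [DecidableEq α] [AddCommMonoid M]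
    (f : α → M) {p q : α} (hpq : p ≠ q) : ∑ a, f a = ∑ a ∈ univ \ {p, q}, f a + (f p + f q) := by
  rw [← sum_pair hpq, sum_sdiff (subset_univ _)]

theorem rankCount_eq_rankCount_mul_swap_add (u : Equiv.Perm (Fin n)) {p q : Fin n}
    (hpq : p < q) (hu : u p < u q) (m x : ℕ) :
    rankCount u m x = rankCount (u * Equiv.swap p q) m x +
      if (p : ℕ) < m ∧ m ≤ q ∧ (u p : ℕ) < x ∧ x ≤ u q then 1 else 0 := by
  have hswap : rankCount (u * Equiv.swap p q) m x =
      #{a : Fin n | ((Equiv.swap p q a : Fin n) : ℕ) < m ∧ (u a : ℕ) < x} := by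
    unfold rankCount
    exact card_equiv (Equiv.swap p q) fun a => by rw [mem_filter, mem_filter]; simp
  have hrest : ∑ a ∈ univ \ {p, q},
      (if ((Equiv.swap p q a : Fin n) : ℕ) < m ∧ (u a : ℕ) < x then 1 else 0) =
        ∑ a ∈ univ \ {p, q}, if (a : ℕ) < m ∧ (u a : ℕ) < x then 1 else 0 :=
    sum_congr rfl fun a ha => by rw [Equiv.swap_apply_of_ne_of_ne (by aesop) (by aesop)]
  have hp : (p : ℕ) < q := hpq
  have hu' : (u p : ℕ) < u q := hu
  rw [hswap, rankCount, card_filter, card_filter, sum_eq_sum_sdiff_pair_add _ hpq.ne,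
    sum_eq_sum_sdiff_pair_add _ hpq.ne, hrest, Equiv.swap_apply_left, Equiv.swap_apply_right]
  split_ifs <;> omega

theorem rankCount_mul_swap_le (u : Equiv.Perm (Fin n)) {p q : Fin n}
    (hpq : p < q) (hu : u p < u q) (m x : ℕ) :
    rankCount (u * Equiv.swap p q) m x ≤ rankCount u m x := by
  rw [rankCount_eq_rankCount_mul_swap_add u hpq hu m x]
  exact Nat.le_add_right _ _

theorem rankCount_add_rankCount_lt (u : Equiv.Perm (Fin n)) {m₁ m₂ x₁ x₂ : ℕ} (a : Fin n)
    (ha : m₁ ≤ a ∧ (a : ℕ) < m₂) (hua : x₁ ≤ u a ∧ (u a : ℕ) < x₂) :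
    rankCount u m₁ x₂ + rankCount u m₂ x₁ < rankCount u m₁ x₁ + rankCount u m₂ x₂ := by
  set S : ℕ → ℕ → Finset (Fin n) := fun m x => {a | (a : ℕ) < m ∧ (u a : ℕ) < x}
  have hinter : S m₁ x₂ ∩ S m₂ x₁ = S m₁ x₁ := by
    ext b; simp only [S, mem_inter, mem_filter, mem_univ, true_and]; omega
  have hunion : S m₁ x₂ ∪ S m₂ x₁ ⊂ S m₂ x₂ := by
    rw [ssubset_iff_of_subset fun b => by
      simp only [S, mem_union, mem_filter, mem_univ, true_and]; omega]
    exact ⟨a, by simp only [S, mem_filter, mem_univ, true_and]; omega,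
      by simp only [S, mem_union, mem_filter, mem_univ, true_and]; omega⟩
  have := card_union_add_card_inter (S m₁ x₂) (S m₂ x₁)
  rw [hinter] at this
  have := card_lt_card hunion
  change #(S m₁ x₂) + #(S m₂ x₁) < #(S m₁ x₁) + #(S m₂ x₂)
  omega

theorem bruhatLen_add_sum_rankCount (u : Equiv.Perm (Fin n)) :
    bruhatLen u + ∑ b : Fin n, rankCount u b (u b) = ∑ b : Fin n, (b : ℕ) := by
  have hinv : bruhatLen u = ∑ b : Fin n, #{a : Fin n | (a : ℕ) < b ∧ (u b : ℕ) < u a} := by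
    simp only [bruhatLen, card_filter, Fintype.sum_prod_type_right, Fin.lt_def]
  have hrow : ∀ b : Fin n, #{a : Fin n | (a : ℕ) < b ∧ (u b : ℕ) < u a} +
      rankCount u b (u b) = b := by
    intro b
    have hcount : ∀ a : Fin n, ((if (a : ℕ) < b ∧ (u b : ℕ) < u a then 1 else 0) +
        if (a : ℕ) < b ∧ (u a : ℕ) < u b then 1 else 0) = if (a : ℕ) < b then 1 else 0 := by
      intro a
      rcases eq_or_ne a b with rfl | hab
      · simp
      · have : (u a : ℕ) ≠ u b := Fin.val_ne_of_ne (u.injective.ne hab)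
        split_ifs <;> omega
    rw [rankCount, card_filter, card_filter, ← sum_add_distrib, sum_congr rfl fun a _ => hcount a,
      ← card_filter, Fin.card_filter_val_lt, min_eq_right b.isLt.le]
  rw [hinv, ← sum_add_distrib]
  exact sum_congr rfl fun b _ => hrow b

theorem bruhatLen_lt_mul_swap (u : Equiv.Perm (Fin n)) {p q : Fin n} (hpq : p < q)
    (hu : u p < u q) : bruhatLen u < bruhatLen (u * Equiv.swap p q) := by
  set u' := u * Equiv.swap p q with hu'
  have hrest : ∑ b ∈ univ \ {p, q}, rankCount u' b (u' b) ≤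
      ∑ b ∈ univ \ {p, q}, rankCount u b (u b) := by
    refine sum_le_sum fun b hb => ?_
    rw [hu', Equiv.Perm.mul_apply, Equiv.swap_apply_of_ne_of_ne (by aesop) (by aesop)]
    exact rankCount_mul_swap_le u hpq hu _ _
  have hp : rankCount u' p (u' p) = rankCount u p (u q) := by
    rw [rankCount_eq_rankCount_mul_swap_add u hpq hu p (u q), if_neg (by omega)]
    simp [hu']
  have hq : rankCount u' q (u' q) = rankCount u q (u p) := by
    rw [rankCount_eq_rankCount_mul_swap_add u hpq hu q (u p), if_neg (by omega)]
    simp [hu']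
  have hrect := rankCount_add_rankCount_lt u p ⟨le_rfl, hpq⟩ ⟨le_rfl, hu⟩
  have h := bruhatLen_add_sum_rankCount u
  have h' := bruhatLen_add_sum_rankCount u'
  rw [sum_eq_sum_sdiff_pair_add _ hpq.ne] at h h'
  omega

theorem lt_of_bruhatLen_lt_mul_swap (u : Equiv.Perm (Fin n)) {p q : Fin n} (hpq : p < q)
    (hl : bruhatLen u < bruhatLen (u * Equiv.swap p q)) : u p < u q := by
  by_contra! hle
  have hlt : (u * Equiv.swap p q) p < (u * Equiv.swap p q) q := by
    simpa using lt_of_le_of_ne hle (u.injective.ne hpq.ne')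
  have := bruhatLen_lt_mul_swap _ hpq hlt
  rw [mul_assoc, Equiv.swap_mul_self, mul_one] at this
  omega

theorem bruhatLE_mul_swap (u : Equiv.Perm (Fin n)) {p q : Fin n} (hpq : p < q)
    (hu : u p < u q) : BruhatLE u (u * Equiv.swap p q) :=
  .single ⟨⟨u p, u q, u.injective.ne hpq.ne, by rw [Equiv.swap_apply_apply]⟩,
    bruhatLen_lt_mul_swap u hpq hu⟩

theorem exists_mul_swap_of_bruhat_cover {u v : Equiv.Perm (Fin n)} (hswap : (v * u⁻¹).IsSwap)
    (hl : bruhatLen u < bruhatLen v) : ∃ p q, p < q ∧ u p < u q ∧ v = u * Equiv.swap p q := by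
  obtain ⟨y, z, hyz, he⟩ := hswap
  have hconj : Equiv.swap y z = u * Equiv.swap (u⁻¹ y) (u⁻¹ z) * u⁻¹ := by
    simpa using Equiv.swap_apply_apply u (u⁻¹ y) (u⁻¹ z)
  have hv : v = u * Equiv.swap (u⁻¹ y) (u⁻¹ z) := by
    rw [← inv_mul_cancel_right v u, he, hconj, inv_mul_cancel_right]
  have hne : u⁻¹ y ≠ u⁻¹ z := (u⁻¹).injective.ne hyz
  rcases hne.lt_or_gt with hlt | hlt
  · exact ⟨_, _, hlt, lt_of_bruhatLen_lt_mul_swap u hlt (hv ▸ hl), hv⟩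
  · rw [Equiv.swap_comm] at hv
    exact ⟨_, _, hlt, lt_of_bruhatLen_lt_mul_swap u hlt (hv ▸ hl), hv⟩

theorem rankCount_le_of_bruhatLE {v w : Equiv.Perm (Fin n)} (h : BruhatLE v w) (m x : ℕ) :
    rankCount w m x ≤ rankCount v m x := by
  induction h with
  | refl => exact le_rfl
  | tail _ hstep ih =>
    obtain ⟨p, q, hpq, hu, rfl⟩ := exists_mul_swap_of_bruhat_cover hstep.1 hstep.2
    exact (rankCount_mul_swap_le _ hpq hu m x).trans ih

theorem rankCount_eq_of_eqOn {v w : Equiv.Perm (Fin n)} {j : ℕ}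
    (h : ∀ a : Fin n, (a : ℕ) < j → v a = w a) (x : ℕ) : rankCount v j x = rankCount w j x := by
  unfold rankCount
  congr 1
  exact filter_congr fun a _ => by
    constructor <;> rintro ⟨ha, hx⟩ <;> [rw [← h a ha]; rw [h a ha]] <;> exact ⟨ha, hx⟩

/-- Used with `j` the first position where `v` and `w` differ and `j'` the first position after
`j` with `v j < v j' ≤ w j`. -/
theorem rankCount_lt_of_first_exchange {v w : Equiv.Perm (Fin n)} {j j' : Fin n} (hjj' : j < j')
    (hpre : ∀ x, rankCount v j x = rankCount w j x)
    (hdom : ∀ m x, rankCount w m x ≤ rankCount v m x)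
    (hv : (v j' : ℕ) ≤ w j)
    (hgap : ∀ a : Fin n, j < a → a < j' → v a < v j ∨ w j < v a)
    {m x : ℕ} (hm : (j : ℕ) < m ∧ m ≤ j') (hx : (v j : ℕ) < x ∧ x ≤ v j') :
    rankCount w m x < rankCount v m x := by
  set X := (w j : ℕ) + 1
  have hjm : (j : ℕ) ≤ m := hm.1.le
  have hX := hdom m X
  rw [rankCount_eq_add_window w hjm, rankCount_eq_add_window v hjm, hpre] at hX ⊢
  have hvX : #{a : Fin n | (j : ℕ) ≤ a ∧ (a : ℕ) < m ∧ (v a : ℕ) < X} ≤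
      #{a : Fin n | (j : ℕ) ≤ a ∧ (a : ℕ) < m ∧ (v a : ℕ) < x} := by
    refine card_le_card fun a => ?_
    simp only [mem_filter, mem_univ, true_and]
    rintro ⟨h1, h2, h3⟩
    rcases eq_or_ne a j with rfl | haj
    · exact ⟨h1, h2, hx.1⟩
    · have hja : j < a := lt_of_le_of_ne h1 (Ne.symm haj)
      have := hgap a hja (by omega)
      simp only [Fin.lt_def] at this
      omega
  have hwx : #{a : Fin n | (j : ℕ) ≤ a ∧ (a : ℕ) < m ∧ (w a : ℕ) < x} <
      #{a : Fin n | (j : ℕ) ≤ a ∧ (a : ℕ) < m ∧ (w a : ℕ) < X} := by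
    refine card_lt_card ((ssubset_iff_of_subset fun a => ?_).2 ⟨j, ?_, ?_⟩)
    all_goals simp only [mem_filter, mem_univ, true_and]
    all_goals omega
  omega

theorem exists_ne_forall_lt_eq {α β : Type*} [LinearOrder α] [WellFoundedLT α] {f g : α → β}
    (h : f ≠ g) : ∃ j, f j ≠ g j ∧ ∀ a < j, f a = g a := by
  obtain ⟨a, ha⟩ := Function.ne_iff.1 h
  obtain ⟨j, hj, hmin⟩ := wellFounded_lt.has_min {a | f a ≠ g a} ⟨a, ha⟩
  exact ⟨j, hj, fun a ha => not_not.1 fun hne => hmin a hne ha⟩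

theorem lt_of_rankCount_le_of_eqOn {v w : Equiv.Perm (Fin n)}
    (hdom : ∀ m x, rankCount w m x ≤ rankCount v m x) {j : Fin n} (hj : v j ≠ w j)
    (hagree : ∀ a < j, v a = w a) : v j < w j := by
  have h := hdom (j + 1) (w j + 1)
  rw [rankCount_succ_left, rankCount_succ_left, rankCount_eq_of_eqOn fun a ha => hagree a ha] at h
  have : (v j : ℕ) ≠ w j := Fin.val_ne_of_ne hj
  simp only [Fin.lt_def]
  split_ifs at h <;> omega

theorem exists_mul_swap_rankCount_le {v w : Equiv.Perm (Fin n)} (hvw : v ≠ w)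
    (hdom : ∀ m x, rankCount w m x ≤ rankCount v m x) :
    ∃ p q, p < q ∧ v p < v q ∧ ∀ m x, rankCount w m x ≤ rankCount (v * Equiv.swap p q) m x := by
  obtain ⟨j, hj, hagree⟩ := exists_ne_forall_lt_eq (DFunLike.coe_injective.ne hvw)
  have hvj := lt_of_rankCount_le_of_eqOn hdom hj hagree
  obtain ⟨j', ⟨hjj', hvjj', hv'⟩, hj'min⟩ :=
    wellFounded_lt.has_min {a | j < a ∧ v j < v a ∧ v a ≤ w j} ⟨v⁻¹ (w j), by
      have hva : v (v⁻¹ (w j)) = w j := by simp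
      have hne : v⁻¹ (w j) ≠ j := fun h => hj (by rw [← hva, h])
      refine ⟨lt_of_le_of_ne (not_lt.1 fun hlt => hne ?_) (Ne.symm hne), by rwa [hva], hva.le⟩
      exact w.injective ((hagree _ hlt).symm.trans hva)⟩
  have hgap : ∀ a : Fin n, j < a → a < j' → v a < v j ∨ w j < v a := fun a h1 h2 => by
    by_contra! h
    exact hj'min a ⟨h1, lt_of_le_of_ne h.1 (v.injective.ne h1.ne), h.2⟩ h2
  refine ⟨j, j', hjj', hvjj', fun m x => ?_⟩
  have hswap := rankCount_eq_rankCount_mul_swap_add v hjj' hvjj' m x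
  split_ifs at hswap with hrect
  · have := rankCount_lt_of_first_exchange hjj' (rankCount_eq_of_eqOn fun a ha => hagree a ha)
      hdom hv' hgap ⟨hrect.1, hrect.2.1⟩ ⟨hrect.2.2.1, hrect.2.2.2⟩
    omega
  · have := hdom m x
    omega

theorem sum_rankCount_mul_swap_lt (u : Equiv.Perm (Fin n)) {p q : Fin n} (hpq : p < q)
    (hu : u p < u q) :
    ∑ m ∈ range (n + 1), ∑ x ∈ range (n + 1), rankCount (u * Equiv.swap p q) m x <
      ∑ m ∈ range (n + 1), ∑ x ∈ range (n + 1), rankCount u m x := by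
  refine sum_lt_sum (fun m _ => sum_le_sum fun x _ => rankCount_mul_swap_le u hpq hu m x)
    ⟨p + 1, mem_range.2 (by omega), sum_lt_sum (fun x _ => rankCount_mul_swap_le u hpq hu _ x)
      ⟨u p + 1, mem_range.2 (by omega), ?_⟩⟩
  have h := rankCount_eq_rankCount_mul_swap_add u hpq hu (p + 1) (u p + 1)
  have hp : (p : ℕ) < q := hpq
  have hu' : (u p : ℕ) < u q := hu
  rw [if_pos (by omega)] at h
  omega

theorem bruhatLE_of_rankCount_le {v w : Equiv.Perm (Fin n)}
    (hdom : ∀ m x, rankCount w m x ≤ rankCount v m x) : BruhatLE v w := by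
  by_cases hvw : v = w
  · exact hvw ▸ Relation.ReflTransGen.refl
  obtain ⟨p, q, hpq, hv, hdom'⟩ := exists_mul_swap_rankCount_le hvw hdom
  exact (bruhatLE_mul_swap v hpq hv).trans (bruhatLE_of_rankCount_le hdom')
termination_by ∑ m ∈ range (n + 1), ∑ x ∈ range (n + 1), rankCount v m x
decreasing_by exact sum_rankCount_mul_swap_lt v hpq hv

theorem bruhatLE_iff_rankCount_le {v w : Equiv.Perm (Fin n)} :
    BruhatLE v w ↔ ∀ m x, rankCount w m x ≤ rankCount v m x :=
  ⟨rankCount_le_of_bruhatLE, bruhatLE_of_rankCount_le⟩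

end RankCount

theorem card_le_card_of_forall_exists_fst_eq {α β γ : Type*} {B : Finset (α × β)}
    {I : Finset (α × γ)} (hB : Set.InjOn Prod.fst (B : Set (α × β)))
    (h : ∀ τ ∈ B, ∃ ι ∈ I, ι.1 = τ.1) : #B ≤ #I :=
  card_le_card_of_forall_subsingleton (fun τ ι => ι.1 = τ.1) h fun _ _ _ hτ _ hτ' =>
    hB hτ.1 hτ'.1 (by rw [← hτ.2, ← hτ'.2])

theorem card_le_card_of_forall_exists_snd_eq {α β γ : Type*} {B : Finset (α × β)}
    {I : Finset (γ × β)} (hB : Set.InjOn Prod.snd (B : Set (α × β)))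
    (h : ∀ τ ∈ B, ∃ ι ∈ I, ι.2 = τ.2) : #B ≤ #I :=
  card_le_card_of_forall_subsingleton (fun τ ι => ι.2 = τ.2) h fun _ _ _ hτ _ hτ' =>
    hB hτ.1 hτ'.1 (by rw [← hτ.2, ← hτ'.2])

section NoncrossingIntervals

variable {α : Type*} [LinearOrder α]

theorem card_filter_add_card_filter_le {I : Finset (α × α)} (hI : ∀ ι ∈ I, ι.1 ≤ ι.2)
    {lo s hi : α} (hlo : lo ≤ s) (hhi : s < hi) :
    #{ι ∈ I | lo ≤ ι.1 ∧ ι.2 ≤ s} + #{ι ∈ I | s < ι.1 ∧ ι.2 < hi} ≤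
      #{ι ∈ I | lo ≤ ι.1 ∧ ι.2 < hi} := by
  rw [← card_union_of_disjoint (disjoint_filter.2 fun ι hι h₁ h₂ =>
    absurd ((hI ι hι).trans h₁.2) (not_le.2 h₂.1))]
  refine card_le_card fun ι => ?_
  simp only [mem_union, mem_filter]
  rintro (⟨hι, h₁, h₂⟩ | ⟨hι, h₁, h₂⟩)
  · exact ⟨hι, h₁, h₂.trans_lt hhi⟩
  · exact ⟨hι, hlo.trans h₁.le, h₂⟩

/-- If some pair of `B` starts at the left end `s` of an interval leaving the window, take `s`
minimal: pairs ending at or before `s` are charged to the interval at their left end, pairs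
ending after `s` to the interval at their right end; noncrossing keeps both inside the window,
on either side of `s`. -/
theorem card_le_card_filter_of_noncrossing {I B : Finset (α × α)} {lo hi : α}
    (hI : ∀ ι ∈ I, ι.1 ≤ ι.2)
    (hnc : ∀ ι ∈ I, ∀ κ ∈ I, ι ≠ κ → ¬(ι.1 ≤ κ.1 ∧ κ.1 < ι.2 ∧ ι.2 ≤ κ.2))
    (hB : ∀ τ ∈ B, lo ≤ τ.1 ∧ τ.1 ≤ τ.2 ∧ τ.2 < hi)
    (hfst : ∀ τ ∈ B, ∃ ι ∈ I, ι.1 = τ.1) (hsnd : ∀ τ ∈ B, ∃ ι ∈ I, ι.2 = τ.2)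
    (hinj₁ : Set.InjOn Prod.fst (B : Set (α × α))) (hinj₂ : Set.InjOn Prod.snd (B : Set (α × α)))
    (hdeg : ∀ τ ∈ B, ∀ ι ∈ I, ι.1 = τ.1 → τ.2 < ι.2 → τ.1 < τ.2) :
    #B ≤ #{ι ∈ I | lo ≤ ι.1 ∧ ι.2 < hi} := by
  by_cases hesc : ∃ τ ∈ B, ∃ ι ∈ I, ι.1 = τ.1 ∧ hi ≤ ι.2
  swap
  · push Not at hesc
    refine card_le_card_of_forall_exists_fst_eq hinj₁ fun τ hτ => ?_
    obtain ⟨ι, hι, h1⟩ := hfst τ hτ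
    exact ⟨ι, mem_filter.2 ⟨hι, h1 ▸ (hB τ hτ).1, hesc τ hτ ι hι h1⟩, h1⟩
  obtain ⟨τ₀, hτ₀, hτ₀min⟩ := exists_min_image {τ ∈ B | ∃ ι ∈ I, ι.1 = τ.1 ∧ hi ≤ ι.2}
    Prod.fst (by simpa [Finset.Nonempty] using hesc)
  simp only [mem_filter] at hτ₀ hτ₀min
  obtain ⟨hτ₀B, ι₀, hι₀, hι₀s, hι₀hi⟩ := hτ₀
  set s := τ₀.1
  have hsplit := card_filter_add_card_filter_not (s := B) fun τ => τ.2 ≤ s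
  have hleft : #{τ ∈ B | τ.2 ≤ s} ≤ #{ι ∈ I | lo ≤ ι.1 ∧ ι.2 ≤ s} := by
    refine card_le_card_of_forall_exists_fst_eq (hinj₁.mono (coe_subset.2 (filter_subset _ _)))
      fun τ hτ => ?_
    obtain ⟨hτB, hτs⟩ := mem_filter.1 hτ
    obtain ⟨ι, hι, h1⟩ := hfst τ hτB
    refine ⟨ι, mem_filter.2 ⟨hι, h1 ▸ (hB τ hτB).1, ?_⟩, h1⟩
    by_contra! hιs
    have hτ₁ : τ.1 < s := (hdeg τ hτB ι hι h1 (hτs.trans_lt hιs)).trans_le hτs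
    have hιhi : ι.2 < hi :=
      not_le.1 fun h => absurd (hτ₀min τ ⟨hτB, ι, hι, h1, h⟩) (not_le.2 hτ₁)
    refine hnc ι hι ι₀ hι₀ (fun h => ?_) ⟨?_, ?_, ?_⟩
    · exact absurd (h ▸ hιhi) (not_lt.2 hι₀hi)
    · rw [h1, hι₀s]; exact hτ₁.le
    · rwa [hι₀s]
    · exact hιhi.le.trans hι₀hi
  have hright : #{τ ∈ B | ¬τ.2 ≤ s} ≤ #{ι ∈ I | s < ι.1 ∧ ι.2 < hi} := by
    refine card_le_card_of_forall_exists_snd_eq (hinj₂.mono (coe_subset.2 (filter_subset _ _)))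
      fun τ hτ => ?_
    obtain ⟨hτB, hτs⟩ := mem_filter.1 hτ
    obtain ⟨ι, hι, h2⟩ := hsnd τ hτB
    have hιhi : ι.2 < hi := h2 ▸ (hB τ hτB).2.2
    refine ⟨ι, mem_filter.2 ⟨hι, not_le.1 fun hιs => hnc ι hι ι₀ hι₀ (fun h => ?_) ⟨?_, ?_, ?_⟩,
      hιhi⟩, h2⟩
    · exact absurd (h ▸ hιhi) (not_lt.2 hι₀hi)
    · rwa [hι₀s]
    · rw [h2, hι₀s]; exact not_le.1 hτs
    · exact hιhi.le.trans hι₀hi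
  have hs := hB τ₀ hτ₀B
  have := card_filter_add_card_filter_le (s := s) hI hs.1 (hs.2.1.trans_lt hs.2.2)
  omega

end NoncrossingIntervals

namespace NCP

variable {n : ℕ} (lam : NCP n)

theorem fst_lt_snd {i j : Fin n} (h : (i, j) ∈ lam.1) : i < j :=
  lam.2.1 _ h

theorem snd_eq_of_mem {i j j' : Fin n} (h : (i, j) ∈ lam.1) (h' : (i, j') ∈ lam.1) : j = j' := by
  by_contra hne
  rcases lt_or_gt_of_ne hne with hlt | hlt
  · exact lam.2.2 _ h _ h' (by simpa using hne) ⟨le_rfl, fst_lt_snd lam h, hlt.le⟩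
  · exact lam.2.2 _ h' _ h (by simpa using Ne.symm hne) ⟨le_rfl, fst_lt_snd lam h', hlt.le⟩

theorem fst_eq_of_mem {i i' j : Fin n} (h : (i, j) ∈ lam.1) (h' : (i', j) ∈ lam.1) : i = i' := by
  by_contra hne
  rcases lt_or_gt_of_ne hne with hlt | hlt
  · exact lam.2.2 _ h _ h' (by simpa using hne) ⟨hlt.le, fst_lt_snd lam h', le_rfl⟩
  · exact lam.2.2 _ h' _ h (by simpa using Ne.symm hne) ⟨hlt.le, fst_lt_snd lam h, le_rfl⟩

theorem mem_lpos {i : Fin n} : i ∈ lpos lam ↔ ∃ j, (i, j) ∈ lam.1 := by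
  simp [lpos]

theorem mem_rpos {j : Fin n} : j ∈ rpos lam ↔ ∃ i, (i, j) ∈ lam.1 := by
  simp [rpos]

def Reaches (a b : Fin n) : Prop :=
  Relation.ReflTransGen (fun x y => (x, y) ∈ lam.1) a b

variable {lam}

theorem Reaches.le {a b : Fin n} (h : Reaches lam a b) : a ≤ b := by
  induction h with
  | refl => exact le_rfl
  | tail _ hbc ih => exact ih.trans (fst_lt_snd lam hbc).le

theorem Reaches.connected {a b : Fin n} (h : Reaches lam a b) : Connected lam a b :=
  Relation.ReflTransGen.mono (fun _ _ => Or.inl) _ _ h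

theorem Connected.symm {a b : Fin n} (h : Connected lam a b) : Connected lam b a :=
  Relation.ReflTransGen.mono (fun _ _ => Or.symm) _ _ h.swap

theorem Connected.trans {a b c : Fin n} (h : Connected lam a b) (h' : Connected lam b c) :
    Connected lam a c :=
  Relation.ReflTransGen.trans h h'

/-- A point is the left end of at most one arc and the right end of at most one arc, so every
block is a single chain of arcs. -/
theorem connected_iff_reaches {a b : Fin n} :
    Connected lam a b ↔ Reaches lam a b ∨ Reaches lam b a := by
  refine ⟨fun h => ?_, fun h => h.elim Reaches.connected fun h => h.connected.symm⟩
  induction h with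
  | refl => exact Or.inl .refl
  | @tail b c _ hbc ih =>
    rcases ih with hab | hba <;> rcases hbc with hbc | hcb
    · exact Or.inl (hab.tail hbc)
    · rcases hab.cases_tail with rfl | ⟨d, had, hdb⟩
      · exact Or.inr (.single hcb)
      · exact Or.inl (fst_eq_of_mem lam hdb hcb ▸ had)
    · exact (Relation.ReflTransGen.total_of_right_unique (r := fun x y => (x, y) ∈ lam.1)
        (fun _ _ _ h h' => snd_eq_of_mem lam h h') hba (.single hbc))
    · exact Or.inr (hba.head hcb)

theorem eq_of_reaches_of_notMem_rpos {a b : Fin n} (hb : b ∉ rpos lam) (h : Reaches lam a b) :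
    a = b := by
  rcases h.cases_tail with rfl | ⟨c, _, hcb⟩
  · rfl
  · exact absurd ((mem_rpos lam).2 ⟨c, hcb⟩) hb

theorem eq_of_reaches_of_notMem_lpos {a b : Fin n} (ha : a ∉ lpos lam) (h : Reaches lam a b) :
    a = b := by
  rcases h.cases_head with rfl | ⟨c, hac, _⟩
  · rfl
  · exact absurd ((mem_lpos lam).2 ⟨c, hac⟩) ha

theorem reaches_of_connected {a b : Fin n} (ha : a ∉ rpos lam) (h : Connected lam a b) :
    Reaches lam a b :=
  (connected_iff_reaches.1 h).elim id fun h => eq_of_reaches_of_notMem_rpos ha h ▸ .refl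

theorem connected_compMax (j : Fin n) : Connected lam j (compMax lam j) :=
  (mem_filter.1 (max'_mem _ _)).2

theorem le_compMax_of_connected {j y : Fin n} (h : Connected lam j y) : y ≤ compMax lam j :=
  le_max' _ _ (mem_filter.2 ⟨mem_univ _, h⟩)

theorem le_compMax (j : Fin n) : j ≤ compMax lam j :=
  le_compMax_of_connected .refl

theorem compMax_notMem_lpos (j : Fin n) : compMax lam j ∉ lpos lam := fun h => by
  obtain ⟨k, hk⟩ := (mem_lpos lam).1 h
  exact absurd (le_compMax_of_connected ((connected_compMax j).tail (Or.inl hk)))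
    (not_le.2 (fst_lt_snd lam hk))

theorem compMax_eq_self {j : Fin n} (hl : j ∉ lpos lam) (hr : j ∉ rpos lam) :
    compMax lam j = j :=
  (eq_of_reaches_of_notMem_lpos hl (reaches_of_connected hr (connected_compMax j))).symm

theorem exists_arc_across {a b t : Fin n} (h : Reaches lam a b) (hat : a ≤ t) (htb : t < b) :
    ∃ z₁ z₂, Reaches lam a z₁ ∧ (z₁, z₂) ∈ lam.1 ∧ z₁ ≤ t ∧ t < z₂ := by
  induction h with
  | refl => exact absurd htb (not_lt.2 hat)
  | @tail c d hac hcd ih =>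
    by_cases htc : t < c
    · exact ih htc
    · exact ⟨c, d, hac, hcd, not_lt.1 htc, htb⟩

/-- `a` and `a'` are the minima of two blocks. If their hulls crossed, an arc of the first block
would jump over `a'` and an arc of the second block over the right end of that arc, and these two
arcs would cross. -/
theorem not_compMax_crossing {a a' : Fin n} (ha : a ∉ rpos lam) (ha' : a' ∉ rpos lam)
    (hne : a ≠ a') :
    ¬(a ≤ a' ∧ a' < compMax lam a ∧ compMax lam a ≤ compMax lam a') := by
  rintro ⟨h₁, h₂, h₃⟩
  have hnc : ¬Connected lam a a' := fun h =>
    hne (eq_of_reaches_of_notMem_rpos ha' (reaches_of_connected ha h))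
  obtain ⟨z₁, z₂, hz₁, hz, hz₁t, hz₂t⟩ :=
    exists_arc_across (reaches_of_connected ha (connected_compMax a)) h₁ h₂
  have hz₂ : Connected lam a z₂ := Reaches.connected (hz₁.tail hz)
  have hz₁a' : z₁ < a' := lt_of_le_of_ne hz₁t fun h => hnc (h ▸ hz₁.connected)
  have hz₂M : z₂ < compMax lam a' := lt_of_le_of_ne ((le_compMax_of_connected hz₂).trans h₃)
    fun h => hnc (hz₂.trans (h ▸ (connected_compMax a').symm))
  obtain ⟨y₁, y₂, hy₁, hy, hy₁t, hy₂t⟩ :=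
    exists_arc_across (reaches_of_connected ha' (connected_compMax a')) hz₂t.le hz₂M
  have hy₁z₂ : y₁ < z₂ := lt_of_le_of_ne hy₁t fun h => hnc (hz₂.trans (h ▸ hy₁.connected.symm))
  have hz₁y₁ : z₁ < y₁ := hz₁a'.trans_le hy₁.le
  exact lam.2.2 _ hz _ hy (fun h => hz₁y₁.ne (congrArg Prod.fst h)) ⟨hz₁y₁.le, hy₁z₂, hy₂t.le⟩

end NCP

section Excedance

variable {n : ℕ}

theorem card_filter_add_card_filter_eq {α : Type*} [Fintype α] {p q r : α → Prop}
    [DecidablePred p] [DecidablePred q] [DecidablePred r]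
    (h : ∀ a, (r a ↔ p a ∨ q a) ∧ ¬(p a ∧ q a)) : #{a | p a} + #{a | q a} = #{a | r a} := by
  rw [← card_union_of_disjoint (disjoint_filter.2 fun a _ hp hq => (h a).2 ⟨hp, hq⟩), ← filter_or]
  exact congrArg card (filter_congr fun a _ => (h a).1.symm)

theorem mem_excPos {w : Equiv.Perm (Fin n)} {j : Fin n} : j ∈ ExcPos w ↔ j ≤ w j := by
  rw [ExcPos, mem_filter]
  simp

theorem mem_excVal {w : Equiv.Perm (Fin n)} {v : Fin n} : v ∈ ExcVal w ↔ w⁻¹ v ≤ v := by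
  rw [ExcVal, mem_image]
  constructor
  · rintro ⟨j, hj, rfl⟩
    simpa using mem_excPos.1 hj
  · exact fun h => ⟨w⁻¹ v, mem_excPos.2 (by simpa using h), by simp⟩

theorem rankCount_succ_self (u : Equiv.Perm (Fin n)) (j : Fin n) :
    rankCount u (j + 1) j = rankCount u j j + if j ∈ ExcPos u then 0 else 1 := by
  rw [rankCount_succ_left]
  split_ifs <;> simp only [mem_excPos, Fin.le_def] at * <;> omega

theorem rankCount_succ_succ (u : Equiv.Perm (Fin n)) (j : Fin n) :
    rankCount u (j + 1) (j + 1) = rankCount u (j + 1) j + if j ∈ ExcVal u then 1 else 0 := by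
  rw [rankCount_succ_right]
  split_ifs <;> simp only [mem_excVal, Fin.le_def] at * <;> omega

theorem rankCount_self_add_card (u : Equiv.Perm (Fin n)) (m : ℕ) :
    rankCount u m m + #{a | a ∈ ExcPos u ∧ (a : ℕ) < m} =
      #{a : Fin n | (a : ℕ) < m} + #{v | v ∈ ExcVal u ∧ (v : ℕ) < m} := by
  have hsmall : rankCount u m m + #{a : Fin n | (a : ℕ) < m ∧ m ≤ u a} =
      #{a : Fin n | (a : ℕ) < m} :=
    card_filter_add_card_filter_eq fun a => by omega
  have hexc : #{a : Fin n | (a : ℕ) < m ∧ m ≤ u a} + #{a | a ∈ ExcPos u ∧ (u a : ℕ) < m} =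
      #{a | a ∈ ExcPos u ∧ (a : ℕ) < m} :=
    card_filter_add_card_filter_eq fun a => by rw [mem_excPos, Fin.le_def]; omega
  have hval : #{a | a ∈ ExcPos u ∧ (u a : ℕ) < m} = #{v | v ∈ ExcVal u ∧ (v : ℕ) < m} :=
    card_equiv u fun a => by rw [mem_filter, mem_filter]; simp [mem_excPos, mem_excVal]
  omega

theorem ExcEq.rankCount_self {u v : Equiv.Perm (Fin n)} (h : ExcEq u v) (m : ℕ) :
    rankCount u m m = rankCount v m m := by
  have hu := rankCount_self_add_card u m
  have hv := rankCount_self_add_card v m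
  rw [h.1, h.2] at hu
  omega

theorem ExcEq.rankCount_succ_self {u v : Equiv.Perm (Fin n)} (h : ExcEq u v) (j : Fin n) :
    rankCount u (j + 1) j = rankCount v (j + 1) j := by
  rw [_root_.rankCount_succ_self, _root_.rankCount_succ_self, h.2, h.rankCount_self]

theorem excEq_of_rankCount_between {u v w : Equiv.Perm (Fin n)} (huv : ExcEq u v)
    (hu : ∀ m x, rankCount u m x ≤ rankCount w m x)
    (hv : ∀ m x, rankCount w m x ≤ rankCount v m x) : ExcEq w u := by
  have hdiag : ∀ m, rankCount w m m = rankCount u m m := fun m =>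
    le_antisymm ((hv m m).trans (huv.rankCount_self m).ge) (hu m m)
  have hsub : ∀ j : Fin n, rankCount w (j + 1) j = rankCount u (j + 1) j := fun j =>
    le_antisymm ((hv _ _).trans (huv.rankCount_succ_self j).ge) (hu _ _)
  refine ⟨Finset.ext fun j => ?_, Finset.ext fun j => ?_⟩
  · have hw := rankCount_succ_succ w j
    have hu := rankCount_succ_succ u j
    rw [hdiag, hsub] at hw
    by_cases hj : j ∈ ExcVal u <;> by_cases hj' : j ∈ ExcVal w <;> simp_all
  · have hw := rankCount_succ_self w j
    have hu := rankCount_succ_self u j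
    rw [hdiag, hsub] at hw
    by_cases hj : j ∈ ExcPos u <;> by_cases hj' : j ∈ ExcPos w <;> simp_all

end Excedance

theorem card_filter_lt_eq_of_strictMonoOn {α : Type*} [Fintype α] [LinearOrder α]
    {P P' : α → Prop} [DecidablePred P] [DecidablePred P'] {T : Equiv.Perm α}
    (hT : ∀ j, P j ↔ P' (T j)) (hmono : StrictMonoOn T {j | P j}) {j : α} (hj : P j) :
    #{a | P a ∧ a < j} = #{v | P' v ∧ v < T j} :=
  card_equiv T fun a => by
    rw [mem_filter, mem_filter]
    simp only [mem_univ, true_and]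
    exact ⟨fun h => ⟨(hT a).1 h.1, hmono h.1 hj h.2⟩,
      fun h => ⟨(hT a).2 h.1, (hmono.lt_iff_lt ((hT a).2 h.1) hj).1 h.2⟩⟩

theorem card_filter_le_of_strictMonoOn {n : ℕ} {P P' : Fin n → Prop} [DecidablePred P]
    [DecidablePred P'] {T w : Equiv.Perm (Fin n)} (hT : ∀ j, P j ↔ P' (T j))
    (hmono : StrictMonoOn T {j | P j}) (hw : ∀ j, P j → P' (w j)) (m x : ℕ) :
    #{a | P a ∧ (a : ℕ) < m ∧ (w a : ℕ) < x} ≤ #{a | P a ∧ (a : ℕ) < m ∧ (T a : ℕ) < x} := by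
  by_cases h : ∃ b, P b ∧ (b : ℕ) < m ∧ x ≤ T b
  · obtain ⟨b, hb, hbm, hbx⟩ := h
    calc #{a | P a ∧ (a : ℕ) < m ∧ (w a : ℕ) < x}
        ≤ #{v | P' v ∧ (v : ℕ) < x} := by
          refine card_le_card_of_injOn w (fun a ha => ?_) w.injective.injOn
          simp only [mem_coe, mem_filter, mem_univ, true_and] at ha ⊢
          exact ⟨hw a ha.1, ha.2.2⟩
      _ ≤ #{a | P a ∧ (a : ℕ) < m ∧ (T a : ℕ) < x} := by
          refine card_le_card_of_injOn (⇑T⁻¹) (fun v hv => ?_) T⁻¹.injective.injOn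
          simp only [mem_coe, mem_filter, mem_univ, true_and] at hv ⊢
          have hTv : T (T⁻¹ v) = v := by simp
          have hP : P (T⁻¹ v) := (hT _).2 (by rw [hTv]; exact hv.1)
          have hlt : T⁻¹ v < b := (hmono.lt_iff_lt hP hb).1 (by rw [Fin.lt_def, hTv]; omega)
          exact ⟨hP, (Fin.lt_def.1 hlt).trans hbm, by rw [hTv]; exact hv.2⟩
  · push Not at h
    exact card_le_card fun a ha => by
      simp only [mem_filter, mem_univ, true_and] at ha ⊢
      exact ⟨ha.1, ha.2.1, h a ha.1 ha.2.1⟩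

theorem card_filter_le_of_noncrossing_perm {n : ℕ} {D : Fin n → Prop} [DecidablePred D]
    {σ ρ : Equiv.Perm (Fin n)} (hσ : ∀ a, D a → a ≤ σ a) (hρ : ∀ a, D a → a ≤ ρ a)
    (himage : ∀ a, D a → ∃ a', D a' ∧ σ a' = ρ a)
    (hnc : ∀ a a', D a → D a' → a ≠ a' → ¬(a ≤ a' ∧ a' < σ a ∧ σ a ≤ σ a'))
    (hfix : ∀ a, D a → ρ a = a → σ a = a) (lo hi : ℕ) :
    #{a | D a ∧ lo ≤ (a : ℕ) ∧ (ρ a : ℕ) < hi} ≤ #{a | D a ∧ lo ≤ (a : ℕ) ∧ (σ a : ℕ) < hi} := by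
  set I := ({a | D a} : Finset (Fin n)).image fun a : Fin n => ((a : ℕ), (σ a : ℕ))
  have hinj : ∀ {f : Fin n → ℕ}, Function.Injective fun a : Fin n => ((a : ℕ), f a) :=
    fun h => Fin.val_injective (congrArg Prod.fst h)
  have hwindow :
      #{ι ∈ I | lo ≤ ι.1 ∧ ι.2 < hi} = #{a | D a ∧ lo ≤ (a : ℕ) ∧ (σ a : ℕ) < hi} := by
    rw [filter_image, card_image_of_injective _ hinj, filter_filter]
  rw [← card_image_of_injective _ hinj, ← hwindow]
  refine card_le_card_filter_of_noncrossing ?hI ?hnc ?hB ?hfst ?hsnd ?hinj₁ ?hinj₂ ?hdeg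
  case hI =>
    simp only [I, mem_image, mem_filter, mem_univ, true_and]
    rintro _ ⟨a, ha, rfl⟩
    exact hσ a ha
  case hnc =>
    simp only [I, mem_image, mem_filter, mem_univ, true_and]
    rintro _ ⟨a, ha, rfl⟩ _ ⟨a', ha', rfl⟩ hne
    exact hnc a a' ha ha' fun h => hne (h ▸ rfl)
  case hB =>
    simp only [mem_image, mem_filter, mem_univ, true_and]
    rintro _ ⟨a, ha, rfl⟩
    exact ⟨ha.2.1, hρ a ha.1, ha.2.2⟩
  case hfst =>
    simp only [I, mem_image, mem_filter, mem_univ, true_and]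
    rintro _ ⟨a, ha, rfl⟩
    exact ⟨_, ⟨a, ha.1, rfl⟩, rfl⟩
  case hsnd =>
    simp only [I, mem_image, mem_filter, mem_univ, true_and]
    rintro _ ⟨a, ha, rfl⟩
    obtain ⟨a', ha', he⟩ := himage a ha.1
    exact ⟨_, ⟨a', ha', rfl⟩, by simp [he]⟩
  case hinj₁ =>
    simp only [coe_image, coe_filter]
    rintro _ ⟨a, -, rfl⟩ _ ⟨a', -, rfl⟩ h
    rw [Fin.val_injective h]
  case hinj₂ =>
    simp only [coe_image, coe_filter]
    rintro _ ⟨a, -, rfl⟩ _ ⟨a', -, rfl⟩ h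
    rw [ρ.injective (Fin.val_injective h)]
  case hdeg =>
    simp only [I, mem_image, mem_filter, mem_univ, true_and]
    rintro _ ⟨a, ha, rfl⟩ _ ⟨a', ha', rfl⟩ h₁ h₂
    obtain rfl : a = a' := (Fin.val_injective h₁).symm
    refine lt_of_le_of_ne (hρ a ha.1) fun h => ?_
    rw [hfix a ha.1 (Fin.val_injective h).symm] at h₂
    exact absurd h₂ (by simp [← Fin.val_injective h])

namespace NCP

variable {n : ℕ} {lam : NCP n}

theorem mem_Cset_iff_s11 {w : Equiv.Perm (Fin n)} :
    w ∈ Cset lam ↔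
      (∀ j, j ≤ w j ↔ j ∉ rpos lam) ∧ ∀ j, j ∈ rpos lam ↔ w j ∈ lpos lam := by
  simp only [Cset, Set.mem_ofPred_eq, Finset.ext_iff, mem_excVal, mem_excPos, mem_sdiff,
    mem_univ, true_and]
  refine ⟨fun ⟨hval, hpos⟩ => ⟨hpos, fun j => ?_⟩, fun ⟨hpos, hRL⟩ => ⟨fun v => ?_, hpos⟩⟩
  · have := hval (w j)
    rw [show (w⁻¹ (w j)) = j by simp] at this
    have := hpos j
    tauto
  · obtain ⟨j, rfl⟩ := w.surjective v
    rw [show (w⁻¹ (w j)) = j by simp]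
    have := hpos j
    have := hRL j
    tauto

theorem card_rpos_le_card_lpos (lam : NCP n) (t : Fin n) :
    #{r | r ∈ rpos lam ∧ r ≤ t} ≤ #{l | l ∈ lpos lam ∧ l < t} := by
  refine card_le_card_of_forall_subsingleton (fun r l => (l, r) ∈ lam.1) (fun r hr => ?_)
    fun _ _ _ hr _ hr' => snd_eq_of_mem lam hr.2 hr'.2
  simp only [mem_filter, mem_univ, true_and] at hr ⊢
  obtain ⟨l, hl⟩ := (mem_rpos lam).1 hr.1
  exact ⟨l, ⟨(mem_lpos lam).2 ⟨r, hl⟩, (fst_lt_snd lam hl).trans_le hr.2⟩, hl⟩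

theorem IsT.lt_of_mem_rpos {T : Equiv.Perm (Fin n)} (hT : IsT lam T) {b : Fin n}
    (hb : b ∈ rpos lam) : T b < b := by
  have hiso := card_filter_lt_eq_of_strictMonoOn hT.1 (fun j hj j' hj' => hT.2.1 j j' hj hj') hb
  have hpartner := card_rpos_le_card_lpos lam b
  have hb' : #{a | a ∈ rpos lam ∧ a < b} < #{a | a ∈ rpos lam ∧ a ≤ b} := by
    refine card_lt_card ((ssubset_iff_of_subset fun a => ?_).2 ⟨b, ?_, ?_⟩)
    all_goals simp only [mem_filter, mem_univ, true_and]
    · exact fun h => ⟨h.1, h.2.le⟩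
    · exact ⟨hb, le_rfl⟩
    · exact fun h => lt_irrefl b h.2
  by_contra! hle
  have : #{v | v ∈ lpos lam ∧ v < b} ≤ #{v | v ∈ lpos lam ∧ v < T b} :=
    card_le_card fun v => by
      simp only [mem_filter, mem_univ, true_and]
      exact fun h => ⟨h.1, h.2.trans_le hle⟩
  omega

theorem IsT.le_of_notMem_rpos {T : Equiv.Perm (Fin n)} (hT : IsT lam T) {a : Fin n}
    (ha : a ∉ rpos lam) : a ≤ T a := by
  have hiso := card_filter_lt_eq_of_strictMonoOn (P := (· ∉ rpos lam)) (P' := (· ∉ lpos lam))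
    (fun j => not_congr (hT.1 j)) (fun j hj j' hj' => hT.2.2 j j' hj hj') ha
  have hpartner := card_rpos_le_card_lpos lam a
  have hle : #{c | c ∈ rpos lam ∧ c < a} ≤ #{c | c ∈ rpos lam ∧ c ≤ a} :=
    card_le_card fun c => by
      simp only [mem_filter, mem_univ, true_and]
      exact fun h => ⟨h.1, h.2.le⟩
  have hR : #{c | c ∈ rpos lam ∧ c < a} + #{c | c ∉ rpos lam ∧ c < a} = #{c | c < a} :=
    card_filter_add_card_filter_eq fun c => by tauto
  have hL : #{c | c ∈ lpos lam ∧ c < a} + #{c | c ∉ lpos lam ∧ c < a} = #{c | c < a} :=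
    card_filter_add_card_filter_eq fun c => by tauto
  by_contra! hlt
  have : #{v | v ∉ lpos lam ∧ v < T a} < #{v | v ∉ lpos lam ∧ v < a} := by
    refine card_lt_card ((ssubset_iff_of_subset fun v => ?_).2 ⟨T a, ?_, ?_⟩)
    all_goals simp only [mem_filter, mem_univ, true_and]
    · exact fun h => ⟨h.1, h.2.trans hlt⟩
    · exact ⟨fun h => ha ((hT.1 a).2 h), hlt⟩
    · exact fun h => lt_irrefl _ h.2
  omega

theorem IsT.mem_Cset_s11 {T : Equiv.Perm (Fin n)} (hT : IsT lam T) : T ∈ Cset lam :=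
  mem_Cset_iff_s11.2 ⟨fun _ => ⟨fun h hj => absurd h (not_le.2 (hT.lt_of_mem_rpos hj)),
    hT.le_of_notMem_rpos⟩, hT.1⟩

theorem IsQ.mem_of_mem_rpos {Q : Equiv.Perm (Fin n)} (hQ : IsQ lam Q) {j : Fin n}
    (hj : j ∈ rpos lam) : (Q j, j) ∈ lam.1 := by
  rw [hQ j, Qfun, dif_pos ((mem_rpos lam).1 hj)]
  exact ((mem_rpos lam).1 hj).choose_spec

theorem IsQ.eq_compMax {Q : Equiv.Perm (Fin n)} (hQ : IsQ lam Q) {j : Fin n}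
    (hj : j ∉ rpos lam) : Q j = compMax lam j := by
  rw [hQ j, Qfun, dif_neg fun h => hj ((mem_rpos lam).2 h)]

theorem IsQ.mem_Cset_s11 {Q : Equiv.Perm (Fin n)} (hQ : IsQ lam Q) : Q ∈ Cset lam := by
  refine mem_Cset_iff_s11.2 ⟨fun j => ⟨fun h hj => ?_, fun hj => ?_⟩, fun j => ⟨fun hj => ?_, ?_⟩⟩
  · exact absurd h (not_le.2 (fst_lt_snd lam (hQ.mem_of_mem_rpos hj)))
  · exact hQ.eq_compMax hj ▸ le_compMax j
  · exact (mem_lpos lam).2 ⟨j, hQ.mem_of_mem_rpos hj⟩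
  · contrapose
    exact fun hj => hQ.eq_compMax hj ▸ compMax_notMem_lpos j

theorem IsT.rankCount_le {T w : Equiv.Perm (Fin n)} (hT : IsT lam T)
    (hw : ∀ j, j ∈ rpos lam ↔ w j ∈ lpos lam) (m x : ℕ) : rankCount w m x ≤ rankCount T m x := by
  have hsplit : ∀ u : Equiv.Perm (Fin n), #{a | a ∈ rpos lam ∧ (a : ℕ) < m ∧ (u a : ℕ) < x} +
      #{a | a ∉ rpos lam ∧ (a : ℕ) < m ∧ (u a : ℕ) < x} = rankCount u m x := fun u => by
    unfold rankCount
    exact card_filter_add_card_filter_eq fun a => by tauto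
  have hR := card_filter_le_of_strictMonoOn hT.1 (fun j hj j' hj' => hT.2.1 j j' hj hj')
    (fun j => (hw j).1) m x
  have hC := card_filter_le_of_strictMonoOn (P := (· ∉ rpos lam)) (P' := (· ∉ lpos lam))
    (fun j => not_congr (hT.1 j))
    (fun j hj j' hj' => hT.2.2 j j' hj hj') (fun j => mt (hw j).2) m x
  rw [← hsplit w, ← hsplit T]
  omega

theorem rankCount_add_card_windows_eq (lam : NCP n) {u : Equiv.Perm (Fin n)}
    (hu : ∀ j, j ∈ rpos lam ↔ u j ∈ lpos lam) (m x : ℕ) :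
    rankCount u m x + #{l | l ∈ lpos lam ∧ x ≤ (l : ℕ) ∧ ((u⁻¹ l : Fin n) : ℕ) < m} +
        #{a | a ∉ rpos lam ∧ m ≤ (a : ℕ) ∧ (u a : ℕ) < x} =
      #{b | b ∈ rpos lam ∧ (b : ℕ) < m} + #{v | v ∉ lpos lam ∧ (v : ℕ) < x} := by
  have hsplit : #{a | a ∈ rpos lam ∧ (a : ℕ) < m ∧ (u a : ℕ) < x} +
      #{a | a ∉ rpos lam ∧ (a : ℕ) < m ∧ (u a : ℕ) < x} = rankCount u m x := by
    unfold rankCount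
    exact card_filter_add_card_filter_eq fun a => by tauto
  have hR : #{a | a ∈ rpos lam ∧ (a : ℕ) < m ∧ (u a : ℕ) < x} +
      #{a | a ∈ rpos lam ∧ (a : ℕ) < m ∧ x ≤ (u a : ℕ)} = #{b | b ∈ rpos lam ∧ (b : ℕ) < m} :=
    card_filter_add_card_filter_eq fun a => by simp only [← not_lt]; tauto
  have hRinv : #{a | a ∈ rpos lam ∧ (a : ℕ) < m ∧ x ≤ (u a : ℕ)} =
      #{l | l ∈ lpos lam ∧ x ≤ (l : ℕ) ∧ ((u⁻¹ l : Fin n) : ℕ) < m} :=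
    card_equiv u fun a => by rw [mem_filter, mem_filter]; simp [hu a, and_comm]
  have hC : #{a | a ∉ rpos lam ∧ (a : ℕ) < m ∧ (u a : ℕ) < x} +
      #{a | a ∉ rpos lam ∧ m ≤ (a : ℕ) ∧ (u a : ℕ) < x} =
        #{a | a ∉ rpos lam ∧ (u a : ℕ) < x} :=
    card_filter_add_card_filter_eq fun a => by simp only [← not_lt]; tauto
  have hCval : #{a | a ∉ rpos lam ∧ (u a : ℕ) < x} = #{v | v ∉ lpos lam ∧ (v : ℕ) < x} :=
    card_equiv u fun a => by rw [mem_filter, mem_filter]; simp [hu a]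
  omega

theorem lt_inv_apply_of_mem_Cset {w : Equiv.Perm (Fin n)} (hw : w ∈ Cset lam) {l : Fin n}
    (hl : l ∈ lpos lam) : l < w⁻¹ l := by
  have hwl : w (w⁻¹ l) = l := by simp
  have hR : w⁻¹ l ∈ rpos lam := ((mem_Cset_iff_s11.1 hw).2 _).2 (by rw [hwl]; exact hl)
  simpa [hwl] using (not_congr ((mem_Cset_iff_s11.1 hw).1 (w⁻¹ l))).2 (not_not.2 hR)

theorem IsQ.rankCount_le {Q w : Equiv.Perm (Fin n)} (hQ : IsQ lam Q) (hw : w ∈ Cset lam)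
    (m x : ℕ) : rankCount Q m x ≤ rankCount w m x := by
  have hQC := mem_Cset_iff_s11.1 hQ.mem_Cset_s11
  have hwC := mem_Cset_iff_s11.1 hw
  -- The two noncrossing families: the arcs `[l, Q⁻¹ l]` and the block hulls `[a, Q a]`.
  have hR := card_filter_le_of_noncrossing_perm (D := (· ∈ lpos lam)) (σ := Q⁻¹) (ρ := w⁻¹)
    (fun l hl => (lt_inv_apply_of_mem_Cset hQ.mem_Cset_s11 hl).le)
    (fun l hl => (lt_inv_apply_of_mem_Cset hw hl).le)
    (fun l hl => ⟨Q (w⁻¹ l), (hQC.2 _).1 ((hwC.2 _).2 (by simpa using hl)), by simp⟩)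
    (fun l l' hl hl' hne => by
      have harc : ∀ {l}, l ∈ lpos lam → (l, Q⁻¹ l) ∈ lam.1 := fun {l} hl => by
        simpa using hQ.mem_of_mem_rpos ((hQC.2 (Q⁻¹ l)).2 (by simpa using hl))
      exact lam.2.2 _ (harc hl) _ (harc hl') (by simpa using hne))
    (fun l hl h => absurd h (lt_inv_apply_of_mem_Cset hw hl).ne') x m
  have hC := card_filter_le_of_noncrossing_perm (D := (· ∉ rpos lam)) (σ := Q) (ρ := w)
    (fun a ha => (hQC.1 a).2 ha) (fun a ha => (hwC.1 a).2 ha)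
    (fun a ha => ⟨Q⁻¹ (w a), fun h => ha ((hwC.2 a).2 (by simpa using (hQC.2 _).1 h)),
      by simp⟩)
    (fun a a' ha ha' hne => by
      rw [hQ.eq_compMax ha, hQ.eq_compMax ha']
      exact not_compMax_crossing ha ha' hne)
    (fun a ha h => by
      rw [hQ.eq_compMax ha]
      exact compMax_eq_self (fun hl => (hwC.2 a).not.1 ha (by rw [h]; exact hl)) ha) m x
  have hQsum := rankCount_add_card_windows_eq lam hQC.2 m x
  have hwsum := rankCount_add_card_windows_eq lam hwC.2 m x
  omega

end NCP

theorem not_lt_lt_of_strictMonoOn_compl {α β : Type*} [LinearOrder α] [LinearOrder β]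
    {f : α → β} {s : Set α} (hs : StrictMonoOn f s) (hsc : StrictMonoOn f sᶜ) {i j k : α}
    (hij : i < j) (hjk : j < k) : ¬(f k < f j ∧ f j < f i) := by
  have hsame : ∀ {a b}, a < b → (a ∈ s ↔ b ∈ s) → f a < f b := fun {a b} hab h => by
    by_cases ha : a ∈ s
    · exact hs ha (h.1 ha) hab
    · exact hsc ha (mt h.2 ha) hab
  rintro ⟨hkj, hji⟩
  by_cases h₁ : i ∈ s ↔ j ∈ s
  · exact (hsame hij h₁).not_gt hji
  by_cases h₂ : j ∈ s ↔ k ∈ s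
  · exact (hsame hjk h₂).not_gt hkj
  exact (hsame (hij.trans hjk) (by tauto)).not_gt (hkj.trans hji)

/-- the excedance class `C_λ` is the Bruhat interval `[T_λ, Q_λ]`,
with Bruhat-minimum the `321`-avoiding permutation `T_λ` and Bruhat-maximum `Q_λ`. -/
theorem stmt11 (n : ℕ) (lam : NCP n) (T Q : Equiv.Perm (Fin n))
    (hT : NCP.IsT lam T) (hQ : NCP.IsQ lam Q) :
    NCP.Cset lam = {w | BruhatLE T w ∧ BruhatLE w Q} ∧
    (∀ i j k : Fin n, i < j → j < k → ¬(T k < T j ∧ T j < T i)) := by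
  have hTC := hT.mem_Cset_s11
  have hQC := hQ.mem_Cset_s11
  refine ⟨Set.ext fun w => ⟨fun hw => ⟨?_, ?_⟩, fun ⟨hTw, hwQ⟩ => ?_⟩, fun i j k => ?_⟩
  · exact bruhatLE_iff_rankCount_le.2 (hT.rankCount_le (NCP.mem_Cset_iff_s11.1 hw).2)
  · exact bruhatLE_iff_rankCount_le.2 (hQ.rankCount_le hw)
  · have hexc := excEq_of_rankCount_between (u := Q) (v := T)
      ⟨hQC.1.trans hTC.1.symm, hQC.2.trans hTC.2.symm⟩ (rankCount_le_of_bruhatLE hwQ)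
      (rankCount_le_of_bruhatLE hTw)
    exact ⟨hexc.1.trans hQC.1, hexc.2.trans hQC.2⟩
  · exact not_lt_lt_of_strictMonoOn_compl (s := {j | j ∈ NCP.rpos lam})
      (fun a ha b hb => hT.2.1 a b ha hb) (fun a ha b hb => hT.2.2 a b ha hb)
end
end
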